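/- arXiv:2106.01471 — 6 statements merged into one kernel-verified Lean document; each statement's English description precedes it below -/
import Mathlib

section
/- Let K be a positive semidefinite, self-adjoint bounded operator on a Hilbert space H, let p ∈ H, and let μ, ν > 0. If f = (μ + νK)⁻¹ p, then for every g ∈ H with ‖g‖ ≤ 1 and (Kg, g) ≤ ε², one has Re(g, p) ≤ (1/2)((μ + νK)⁻¹ p, p) + (1/2)(μ + νε²). -/
/-!
Put `f = T p` and `A = μ + νK`, so that `p = A f`. The operator `A` is positive, hence
`(f, g) ↦ (f, A g)` is a positive semidefinite Hermitian form and
`2 Re (f, A g) ≤ (f, A f) + (g, A g)`. The left side is `2 Re (p, g)`, the first term on the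
right is `(p, T p)`, and the constraints on `g` bound `(g, A g) = μ‖g‖² + ν (g, K g)` by
`μ + ν ε²`.
-/

local notation "⟪" x ", " y "⟫" => @inner ℂ _ _ x y

namespace ContinuousLinearMap

variable {𝕜 E : Type*} [RCLike 𝕜] [NormedAddCommGroup E] [InnerProductSpace 𝕜 E]

theorem IsPositive.two_mul_re_inner_le {A : E →L[𝕜] E} (hA : A.IsPositive) (x y : E) :
    2 * RCLike.re (inner 𝕜 x (A y)) ≤
      RCLike.re (inner 𝕜 x (A x)) + RCLike.re (inner 𝕜 y (A y)) := by
  have hsymm : RCLike.re (inner 𝕜 y (A x)) = RCLike.re (inner 𝕜 x (A y)) := by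
    rw [← hA.inner_left_eq_inner_right, inner_re_symm]
  have h := hA.re_inner_nonneg_right (x - y)
  simp only [map_sub, inner_sub_left, inner_sub_right] at h
  linarith

end ContinuousLinearMap

theorem stmt2_general {H : Type*} [NormedAddCommGroup H] [InnerProductSpace ℂ H]
    (K T : H →L[ℂ] H)
    (hsa : ∀ f g, ⟪K f, g⟫ = ⟪f, K g⟫) (hpsd : ∀ f, 0 ≤ (⟪f, K f⟫).re)
    (μ ν : ℝ) (hμ : 0 < μ) (hν : 0 < ν) (ε : ℝ)
    (hT₁ : ∀ f, (μ : ℂ) • T f + (ν : ℂ) • K (T f) = f)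
    (p : H) :
    ∀ g : H, ‖g‖ ≤ 1 → (⟪g, K g⟫).re ≤ ε ^ 2 →
      (⟪p, g⟫).re ≤ (1 / 2) * (⟪p, T p⟫).re + (1 / 2) * (μ + ν * ε ^ 2) := by
  intro g hg hKg
  set A : H →L[ℂ] H := (μ : ℂ) • 1 + (ν : ℂ) • K
  have hK : K.IsPositive := ⟨hsa, fun f => by
    simpa [ContinuousLinearMap.reApplyInnerSelf, hsa] using hpsd f⟩
  have hA : A.IsPositive :=
    (ContinuousLinearMap.isPositive_one.smul_of_nonneg (by exact_mod_cast hμ.le)).add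
      (hK.smul_of_nonneg (by exact_mod_cast hν.le))
  have hAT : A (T p) = p := by simpa [A] using hT₁ p
  have hgAg : (⟪g, A g⟫).re ≤ μ + ν * ε ^ 2 := by
    have hAg : (⟪g, A g⟫).re = μ * ‖g‖ ^ 2 + ν * (⟪g, K g⟫).re := by
      simp [A, inner_self_eq_norm_sq_to_K, ← Complex.ofReal_pow]
    have hg2 : ‖g‖ ^ 2 ≤ 1 := pow_le_one₀ (norm_nonneg g) hg
    rw [hAg]
    nlinarith
  have hform := hA.two_mul_re_inner_le (T p) g
  rw [← hA.inner_left_eq_inner_right, hAT, inner_re_symm (T p)] at hform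
  simp only [RCLike.re_to_complex] at hform
  linarith

/-- Upper bound via Lagrange duality: with `T = (μ + νK)⁻¹`, for every `g`
with `‖g‖ ≤ 1` and `(Kg, g) ≤ ε²` one has
`Re(g, p) ≤ ½((μ+νK)⁻¹p, p) + ½(μ + νε²)`. -/
theorem stmt2 {H : Type*} [NormedAddCommGroup H] [InnerProductSpace ℂ H] [CompleteSpace H]
    (K T : H →L[ℂ] H)
    (hsa : ∀ f g, ⟪K f, g⟫ = ⟪f, K g⟫) (hpsd : ∀ f, 0 ≤ (⟪f, K f⟫).re)
    (μ ν : ℝ) (hμ : 0 < μ) (hν : 0 < ν) (ε : ℝ) (hε : 0 ≤ ε)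
    (hT₁ : ∀ f, (μ : ℂ) • T f + (ν : ℂ) • K (T f) = f)
    (hT₂ : ∀ f, T ((μ : ℂ) • f + (ν : ℂ) • K f) = f)
    (p : H) :
    ∀ g : H, ‖g‖ ≤ 1 → (⟪g, K g⟫).re ≤ ε ^ 2 →
      (⟪p, g⟫).re ≤ (1 / 2) * (⟪p, T p⟫).re + (1 / 2) * (μ + ν * ε ^ 2) :=
  stmt2_general K T hsa hpsd μ ν hμ hν ε hT₁ p
end

section
/- Let λ₁,...,λ_m be distinct positive reals and a₀ ≥ 0, a₁,...,a_m ≥ 0 with at least one aⱼ > 0 for j ≥ 1. Define Φ(η) = (∑_{j=1}^m λⱼ aⱼ/(λⱼ+η)²) / (a₀/η² + ∑_{j=1}^m aⱼ/(λⱼ+η)²) for η > 0. Then Φ is strictly increasing on (0,∞) provided a₀ > 0. -/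
/-!
Φ is the mean of the nodes `0, λ₁, …, λₘ` under the weights `a₀/η², aⱼ/(λⱼ+η)²`. Raising `η`
shifts weight towards the larger nodes: for `x < y` the difference of cross products
`N(y) D(x) - N(x) D(y)` symmetrizes to a sum over pairs `i, j` of terms
`aᵢ aⱼ (λᵢ - λⱼ)² (y - x) (…) / (…)`, all nonnegative, and the pair (node `0`, a node `λⱼ`
with `aⱼ > 0`) contributes a positive one.
-/

open Finset

theorem Finset.two_mul_sum_mul_sum_sub_eq_sum_sum {ι R : Type*} [CommRing R] (s : Finset ι)
    (L u v : ι → R) :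
    2 * ((∑ i ∈ s, L i * u i) * ∑ j ∈ s, v j - (∑ i ∈ s, L i * v i) * ∑ j ∈ s, u j) =
      ∑ i ∈ s, ∑ j ∈ s, (L i - L j) * (u i * v j - v i * u j) := by
  simp only [sum_mul_sum, ← sum_sub_distrib, two_mul]
  conv_lhs => enter [2]; rw [sum_comm]
  rw [← sum_add_distrib]
  refine sum_congr rfl fun i _ => ?_
  rw [← sum_add_distrib]
  exact sum_congr rfl fun j _ => by ring

section CrossTerm

variable {li lj ai aj x y : ℝ}

lemma cross_term_eq (hix : li + x ≠ 0) (hiy : li + y ≠ 0) (hjx : lj + x ≠ 0)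
    (hjy : lj + y ≠ 0) :
    (li - lj) * (ai / (li + y) ^ 2 * (aj / (lj + x) ^ 2) - ai / (li + x) ^ 2 * (aj / (lj + y) ^ 2))
      = ai * aj * (li - lj) ^ 2 * (y - x) * ((li + x) * (lj + y) + (li + y) * (lj + x))
        / ((li + x) ^ 2 * (li + y) ^ 2 * (lj + x) ^ 2 * (lj + y) ^ 2) := by
  field_simp
  ring

lemma cross_term_nonneg (hai : 0 ≤ ai) (haj : 0 ≤ aj) (hix : 0 < li + x) (hiy : 0 < li + y)
    (hjx : 0 < lj + x) (hjy : 0 < lj + y) (hxy : x ≤ y) :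
    0 ≤ (li - lj) *
      (ai / (li + y) ^ 2 * (aj / (lj + x) ^ 2) - ai / (li + x) ^ 2 * (aj / (lj + y) ^ 2)) := by
  rw [cross_term_eq hix.ne' hiy.ne' hjx.ne' hjy.ne']
  have : 0 ≤ y - x := sub_nonneg.2 hxy
  positivity

lemma cross_term_pos (hai : 0 < ai) (haj : 0 < aj) (hix : 0 < li + x) (hiy : 0 < li + y)
    (hjx : 0 < lj + x) (hjy : 0 < lj + y) (hxy : x < y) (hl : li ≠ lj) :
    0 < (li - lj) *
      (ai / (li + y) ^ 2 * (aj / (lj + x) ^ 2) - ai / (li + x) ^ 2 * (aj / (lj + y) ^ 2)) := by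
  rw [cross_term_eq hix.ne' hiy.ne' hjx.ne' hjy.ne']
  have : 0 < y - x := sub_pos.2 hxy
  have : li - lj ≠ 0 := sub_ne_zero.2 hl
  positivity

end CrossTerm

theorem strictMonoOn_sum_mul_div_sq_div_sum_div_sq {ι : Type*} [Fintype ι] (L A : ι → ℝ)
    (hL : ∀ k, 0 ≤ L k) (hA : ∀ k, 0 ≤ A k) (hspread : ∃ i j, L i ≠ L j ∧ 0 < A i ∧ 0 < A j) :
    StrictMonoOn (fun t => (∑ k, L k * A k / (L k + t) ^ 2) / ∑ k, A k / (L k + t) ^ 2)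
      (Set.Ioi 0) := by
  intro x (hx : 0 < x) y (hy : 0 < y) hxy
  obtain ⟨i₀, j₀, hl, hi₀, hj₀⟩ := hspread
  have hLt : ∀ k {t : ℝ}, 0 < t → 0 < L k + t := fun k _ ht => add_pos_of_nonneg_of_pos (hL k) ht
  have hD : ∀ {t : ℝ}, 0 < t → 0 < ∑ k, A k / (L k + t) ^ 2 := fun ht =>
    sum_pos' (fun k _ => div_nonneg (hA k) (sq_nonneg _))
      ⟨i₀, mem_univ _, div_pos hi₀ (pow_pos (hLt i₀ ht) 2)⟩
  have hterm : ∀ i j, 0 ≤ (L i - L j) * (A i / (L i + y) ^ 2 * (A j / (L j + x) ^ 2)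
      - A i / (L i + x) ^ 2 * (A j / (L j + y) ^ 2)) := fun i j =>
    cross_term_nonneg (hA i) (hA j) (hLt i hx) (hLt i hy) (hLt j hx) (hLt j hy) hxy.le
  have hcross : 0 < 2 * ((∑ k, L k * (A k / (L k + y) ^ 2)) * ∑ k, A k / (L k + x) ^ 2
      - (∑ k, L k * (A k / (L k + x) ^ 2)) * ∑ k, A k / (L k + y) ^ 2) := by
    rw [two_mul_sum_mul_sum_sub_eq_sum_sum]
    exact sum_pos' (fun i _ => sum_nonneg fun j _ => hterm i j)
      ⟨i₀, mem_univ _, sum_pos' (fun j _ => hterm i₀ j) ⟨j₀, mem_univ _,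
        cross_term_pos hi₀ hj₀ (hLt i₀ hx) (hLt i₀ hy) (hLt j₀ hx) (hLt j₀ hy) hxy hl⟩⟩
  simp only [mul_div_assoc] at hcross ⊢
  rw [div_lt_div_iff₀ (hD hx) (hD hy)]
  linarith

theorem stmt4_general (m : ℕ) (lam : Fin m → ℝ) (a : Fin m → ℝ) (a₀ : ℝ)
    (hlam : ∀ j, 0 < lam j)
    (ha₀ : 0 < a₀) (ha : ∀ j, 0 ≤ a j) (hne : ∃ j, 0 < a j)
    (Φ : ℝ → ℝ)
    (hΦ : ∀ η, 0 < η → Φ η =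
      (∑ j, lam j * a j / (lam j + η) ^ 2) /
        (a₀ / η ^ 2 + ∑ j, a j / (lam j + η) ^ 2)) :
    StrictMonoOn Φ (Set.Ioi (0 : ℝ)) := by
  obtain ⟨j, hj⟩ := hne
  have hmono := strictMonoOn_sum_mul_div_sq_div_sum_div_sq (Fin.cons 0 lam) (Fin.cons a₀ a)
    (Fin.cases le_rfl fun k => (hlam k).le) (Fin.cases ha₀.le ha)
    ⟨0, j.succ, by simpa using (hlam j).ne, by simpa using ha₀, by simpa using hj⟩
  refine hmono.congr fun η (hη : 0 < η) => ?_
  simp [hΦ η hη, Fin.sum_univ_succ]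

/-- The function
`Φ(η) = (∑ⱼ λⱼaⱼ/(λⱼ+η)²) / (a₀/η² + ∑ⱼ aⱼ/(λⱼ+η)²)` is strictly increasing on `(0,∞)`. -/
theorem stmt4 (m : ℕ) (hm : 1 ≤ m) (lam : Fin m → ℝ) (a : Fin m → ℝ) (a₀ : ℝ)
    (hlam : ∀ j, 0 < lam j) (hdist : Function.Injective lam)
    (ha₀ : 0 < a₀) (ha : ∀ j, 0 ≤ a j) (hne : ∃ j, 0 < a j)
    (Φ : ℝ → ℝ)
    (hΦ : ∀ η, 0 < η → Φ η =
      (∑ j, lam j * a j / (lam j + η) ^ 2) /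
        (a₀ / η ^ 2 + ∑ j, a j / (lam j + η) ^ 2)) :
    StrictMonoOn Φ (Set.Ioi (0 : ℝ)) :=
  stmt4_general m lam a a₀ hlam ha₀ ha hne Φ hΦ
end

section
/- Let H be a reproducing kernel Hilbert space with reproducing elements p_w, and K f = ∑_{j=1}^n f(zⱼ) p_{zⱼ}. Suppose p_z = K u for some u ∈ H, and set cⱼ = u(zⱼ). Then f(z) = ∑_{j=1}^n cⱼ · conj(f(zⱼ)) for every f ∈ H, and consequently A_z(ε) := sup{|f(z)| : ‖f‖ ≤ 1, ∑ⱼ|f(zⱼ)|² ≤ ε²} satisfies A_z(ε) ≤ ε |c| where |c| is the Euclidean norm of (c₁,...,cₙ). -/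
open scoped ComplexConjugate
local notation "⟪" x ", " y "⟫" => @inner ℂ _ _ x y

/-! Pairing `f` with `p_z = K u = ∑ⱼ u(zⱼ) p_{zⱼ}` expands `f(z) = (f, p_z)` as a combination of the
values `f(zⱼ)` with coefficients `cⱼ` (conjugated, since Mathlib's inner product is conjugate-linear
in the first slot). Cauchy–Schwarz in `ℂⁿ` then bounds `|f(z)|` by `|c|` times the Euclidean norm of
`(f(zⱼ))ⱼ`, which is at most `ε`. -/

open Finset

theorem inner_eq_sum_of_eq_sum_smul {𝕜 E ι : Type*} [RCLike 𝕜] [NormedAddCommGroup E]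
    [InnerProductSpace 𝕜 E] {s : Finset ι} {a : ι → 𝕜} {y : ι → E} {x : E}
    (hx : x = ∑ i ∈ s, a i • y i) (f : E) :
    inner 𝕜 x f = ∑ i ∈ s, conj (a i) * inner 𝕜 (y i) f := by
  simp only [hx, sum_inner, inner_smul_left]

theorem norm_sum_conj_mul_le {𝕜 ι : Type*} [RCLike 𝕜] (s : Finset ι) (a b : ι → 𝕜) :
    ‖∑ i ∈ s, conj (a i) * b i‖ ≤ √(∑ i ∈ s, ‖a i‖ ^ 2) * √(∑ i ∈ s, ‖b i‖ ^ 2) :=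
  calc ‖∑ i ∈ s, conj (a i) * b i‖
      ≤ ∑ i ∈ s, ‖a i‖ * ‖b i‖ := by
        refine (norm_sum_le _ _).trans_eq (sum_congr rfl fun i _ ↦ ?_)
        rw [norm_mul, RCLike.norm_conj]
    _ ≤ √(∑ i ∈ s, ‖a i‖ ^ 2) * √(∑ i ∈ s, ‖b i‖ ^ 2) := Real.sum_mul_le_sqrt_mul_sqrt _ _ _

theorem stmt12_general {H Ω : Type*} [NormedAddCommGroup H] [InnerProductSpace ℂ H]
    (p : Ω → H) (ev : H → Ω → ℂ) (hev : ∀ f w, ev f w = ⟪p w, f⟫)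
    (n : ℕ) (z : Ω) (zs : Fin n → Ω)
    (K : H → H) (hK : ∀ f, K f = ∑ j, ev f (zs j) • p (zs j))
    (u : H) (hu : K u = p z)
    (c : Fin n → ℂ) (hc : ∀ j, c j = ev u (zs j)) :
    (∀ f : H, ev f z = ∑ j, conj (c j) * ev f (zs j)) ∧
    (∀ ε : ℝ, 0 ≤ ε → ∀ f : H, ‖f‖ ≤ 1 → (∑ j, ‖ev f (zs j)‖ ^ 2) ≤ ε ^ 2 →
      ‖ev f z‖ ≤ ε * Real.sqrt (∑ j, ‖c j‖ ^ 2)) := by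
  have hpz : p z = ∑ j, c j • p (zs j) := by
    simp only [← hu, hK, hc]
  have expand (f : H) : ev f z = ∑ j, conj (c j) * ev f (zs j) := by
    simp only [hev, inner_eq_sum_of_eq_sum_smul hpz f]
  refine ⟨expand, fun ε hε f _ hf ↦ ?_⟩
  calc ‖ev f z‖ ≤ √(∑ j, ‖c j‖ ^ 2) * √(∑ j, ‖ev f (zs j)‖ ^ 2) := by
        rw [expand]
        exact norm_sum_conj_mul_le _ _ _
    _ ≤ √(∑ j, ‖c j‖ ^ 2) * ε := by
        gcongr
        exact (Real.sqrt_le_left hε).mpr hf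
    _ = ε * √(∑ j, ‖c j‖ ^ 2) := mul_comm _ _

/-- If `p_z = K u`, with `cⱼ = u(zⱼ)`, then the value of every `f` at `z`
is determined by its values at the `zⱼ` via `f(z) = ∑ⱼ conj(cⱼ) f(zⱼ)`
(equivalently, `f(z) = ∑ⱼ cⱼ·conj(f(zⱼ))` after conjugation in the paper's convention),
and consequently `A_z(ε) ≤ ε|c|`. -/
theorem stmt12 {H Ω : Type*} [NormedAddCommGroup H] [InnerProductSpace ℂ H] [CompleteSpace H]
    (p : Ω → H) (ev : H → Ω → ℂ) (hev : ∀ f w, ev f w = ⟪p w, f⟫)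
    (n : ℕ) (z : Ω) (zs : Fin n → Ω)
    (K : H → H) (hK : ∀ f, K f = ∑ j, ev f (zs j) • p (zs j))
    (u : H) (hu : K u = p z)
    (c : Fin n → ℂ) (hc : ∀ j, c j = ev u (zs j)) :
    (∀ f : H, ev f z = ∑ j, conj (c j) * ev f (zs j)) ∧
    (∀ ε : ℝ, 0 ≤ ε → ∀ f : H, ‖f‖ ≤ 1 → (∑ j, ‖ev f (zs j)‖ ^ 2) ≤ ε ^ 2 →
      ‖ev f z‖ ≤ ε * Real.sqrt (∑ j, ‖c j‖ ^ 2)) :=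
  stmt12_general p ev hev n z zs K hK u hu c hc
end

section
/- Let K = ∑_{j=1}^m λⱼ Pⱼ be a finite-rank positive semidefinite self-adjoint operator with distinct eigenvalues λⱼ > 0 and P₀ the projection onto ker K, and let p ∈ H with P₀ p ≠ 0. Then for u_η = (K + η)⁻¹ p, the quantity u_η(z) interpreted as (u_η, p), one has ((u_η, p))/‖u_η‖ → ‖P₀ p‖ as η → 0⁺, i.e., lim_{η→0⁺} (u_η, p)/‖u_η‖ = ‖P₀ p‖. -/
/-!
Applying `P₀` and each `Pⱼ` to `K u_η + η u_η = p` gives `η P₀ u_η = P₀ p` and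
`(λⱼ + η) Pⱼ u_η = Pⱼ p`, so `η u_η = P₀ p + ∑ⱼ η/(λⱼ + η) Pⱼ p → P₀ p`. The quotient
`Re (w, p)/‖w‖` is invariant under `w ↦ η w` for `η > 0` and continuous at `P₀ p ≠ 0`, where it
equals `(P₀ p, p)/‖P₀ p‖ = ‖P₀ p‖`.
-/

open Filter Topology

local notation "⟪" x ", " y "⟫" => @inner ℂ _ _ x y

section OrthogonalIdempotents

variable {R A ι : Type*} [CommSemiring R] [Ring A] [Algebra R A] [Fintype ι] {P : ι → A}

theorem mul_sum_smul_of_orthogonal_idempotents (hidem : ∀ j, P j * P j = P j)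
    (horth : ∀ j k, j ≠ k → P j * P k = 0) (c : ι → R) (k : ι) :
    P k * ∑ j, c j • P j = c k • P k := by
  classical
  rw [Finset.mul_sum, Finset.sum_eq_single k]
  · rw [mul_smul_comm, hidem]
  · intro j _ hjk
    rw [mul_smul_comm, horth k j hjk.symm, smul_zero]
  · simp

theorem mul_one_sub_sum_of_orthogonal_idempotents (hidem : ∀ j, P j * P j = P j)
    (horth : ∀ j k, j ≠ k → P j * P k = 0) (k : ι) :
    P k * (1 - ∑ j, P j) = 0 := by
  have h := mul_sum_smul_of_orthogonal_idempotents (R := ℕ) hidem horth 1 k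
  simp only [Pi.one_apply, one_smul] at h
  rw [mul_sub, mul_one, h, sub_self]

theorem one_sub_sum_mul_sum_smul_of_orthogonal_idempotents (hidem : ∀ j, P j * P j = P j)
    (horth : ∀ j k, j ≠ k → P j * P k = 0) (c : ι → R) :
    (1 - ∑ j, P j) * ∑ j, c j • P j = 0 := by
  rw [sub_mul, one_mul, Finset.sum_mul]
  simp only [mul_sum_smul_of_orthogonal_idempotents hidem horth, sub_self]

end OrthogonalIdempotents

theorem smul_eq_one_sub_sum_apply_add_sum_div_smul {𝕜 E ι : Type*} [NontriviallyNormedField 𝕜]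
    [NormedAddCommGroup E] [NormedSpace 𝕜 E] [Fintype ι] {P : ι → E →L[𝕜] E}
    (hidem : ∀ j, P j * P j = P j) (horth : ∀ j k, j ≠ k → P j * P k = 0)
    (c : ι → 𝕜) {η : 𝕜} (hc : ∀ j, c j + η ≠ 0) {u p : E}
    (hu : (∑ j, c j • P j) u + η • u = p) :
    η • u = (1 - ∑ j, P j) p + ∑ j, (η / (c j + η)) • P j p := by
  set Q := 1 - ∑ j, P j with hQ
  have hQu : η • Q u = Q p := by
    rw [← hu, map_add, map_smul, ← mul_apply_eq_comp,
      one_sub_sum_mul_sum_smul_of_orthogonal_idempotents hidem horth,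
      zero_apply, zero_add]
  have hPu : ∀ j, (c j + η) • P j u = P j p := fun j => by
    rw [← hu, map_add, map_smul, ← mul_apply_eq_comp,
      mul_sum_smul_of_orthogonal_idempotents hidem horth, smul_apply, add_smul]
  have hdecomp : u = Q u + ∑ j, P j u := by simp [hQ]
  calc η • u = η • Q u + ∑ j, η • P j u := by
        conv_lhs => rw [hdecomp]
        rw [smul_add, Finset.smul_sum]
    _ = Q p + ∑ j, (η / (c j + η)) • P j p := by
        rw [hQu]
        congr 1
        refine Finset.sum_congr rfl fun j _ => ?_
        rw [← hPu j, smul_smul, div_mul_cancel₀ _ (hc j)]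

section InnerProductSpace

variable {𝕜 E : Type*} [RCLike 𝕜] [NormedAddCommGroup E] [InnerProductSpace 𝕜 E]

theorem re_inner_one_sub_sum_apply_self {ι : Type*} [Fintype ι] {P : ι → E →L[𝕜] E}
    (hsa : ∀ j, (P j : E →ₗ[𝕜] E).IsSymmetric)
    (hidem : ∀ j, P j * P j = P j) (horth : ∀ j k, j ≠ k → P j * P k = 0) (p : E) :
    RCLike.re (inner 𝕜 ((1 - ∑ j, P j) p) p) = ‖(1 - ∑ j, P j) p‖ ^ 2 := by
  set Q := 1 - ∑ j, P j with hQ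
  have hp : p = Q p + ∑ j, P j p := by simp [hQ]
  have horthQ : ∀ j, inner 𝕜 (Q p) (P j p) = 0 := fun j => calc
    inner 𝕜 (Q p) (P j p) = inner 𝕜 (P j (Q p)) p := (hsa j _ _).symm
    _ = 0 := by
      rw [← mul_apply_eq_comp, hQ, mul_one_sub_sum_of_orthogonal_idempotents hidem horth,
        zero_apply, inner_zero_left]
  nth_rewrite 2 [hp]
  rw [inner_add_right, inner_sum, Finset.sum_eq_zero fun j _ => horthQ j, add_zero,
    inner_self_eq_norm_sq]

theorem re_inner_smul_div_norm_smul {t : ℝ} (ht : 0 < t) (u p : E) :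
    RCLike.re (inner 𝕜 ((t : 𝕜) • u) p) / ‖(t : 𝕜) • u‖ = RCLike.re (inner 𝕜 u p) / ‖u‖ := by
  rw [inner_smul_left, RCLike.conj_ofReal, RCLike.re_ofReal_mul, norm_smul, RCLike.norm_ofReal,
    abs_of_pos ht, mul_div_mul_left _ _ ht.ne']

end InnerProductSpace

theorem stmt16_general {H : Type*} [NormedAddCommGroup H] [InnerProductSpace ℂ H]
    (m : ℕ) (lam : Fin m → ℝ) (hlam : ∀ j, 0 < lam j)
    (P : Fin m → H →L[ℂ] H) (P₀ K : H →L[ℂ] H)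
    (hPsa : ∀ j, ∀ f g, ⟪P j f, g⟫ = ⟪f, P j g⟫)
    (hPidem : ∀ j, P j ∘L P j = P j)
    (hPorth : ∀ j k, j ≠ k → P j ∘L P k = 0)
    (hK : K = ∑ j, (lam j : ℂ) • P j)
    (hP₀ : P₀ = 1 - ∑ j, P j)
    (p : H) (hp : P₀ p ≠ 0)
    (u : ℝ → H) (hu : ∀ η : ℝ, 0 < η → K (u η) + (η : ℂ) • u η = p) :
    Tendsto (fun η => (⟪u η, p⟫).re / ‖u η‖) (𝓝[>] 0) (𝓝 ‖P₀ p‖) := by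
  set v : ℝ → H := fun η => P₀ p + ∑ j, ((η : ℂ) / (lam j + η)) • P j p
  have hscaled : ∀ η : ℝ, 0 < η → (η : ℂ) • u η = v η := fun η hη => by
    simp only [v, hP₀]
    refine smul_eq_one_sub_sum_apply_add_sum_div_smul hPidem hPorth _ (fun j => ?_) (hK ▸ hu η hη)
    exact_mod_cast (add_pos (hlam j) hη).ne'
  have hv : Tendsto v (𝓝[>] 0) (𝓝 (P₀ p)) := by
    have hcont : ContinuousAt v 0 := by
      fun_prop (disch := simp [(hlam _).ne'])
    simpa [v] using hcont.tendsto.mono_left nhdsWithin_le_nhds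
  have hquot : Tendsto (fun w : H => (⟪w, p⟫).re / ‖w‖) (𝓝 (P₀ p)) (𝓝 ‖P₀ p‖) := by
    have hnorm : ‖P₀ p‖ ≠ 0 := norm_ne_zero_iff.mpr hp
    have hcont : ContinuousAt (fun w : H => (⟪w, p⟫).re / ‖w‖) (P₀ p) := by
      fun_prop (disch := exact hnorm)
    have hval : (⟪P₀ p, p⟫).re / ‖P₀ p‖ = ‖P₀ p‖ := by
      rw [← RCLike.re_to_complex, hP₀, re_inner_one_sub_sum_apply_self hPsa hPidem hPorth,
        ← hP₀, sq, mul_div_cancel_right₀ _ hnorm]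
    simpa only [hval] using hcont.tendsto
  refine (hquot.comp hv).congr' ?_
  filter_upwards [self_mem_nhdsWithin] with η hη
  rw [Function.comp_apply, ← hscaled η hη]
  exact re_inner_smul_div_norm_smul (𝕜 := ℂ) hη (u η) p

/-- With `u_η = (K+η)⁻¹p` and `P₀p ≠ 0`,
`(u_η, p)/‖u_η‖ → ‖P₀p‖` as `η → 0⁺`. -/
theorem stmt16 {H : Type*} [NormedAddCommGroup H] [InnerProductSpace ℂ H] [CompleteSpace H]
    (m : ℕ) (lam : Fin m → ℝ) (hlam : ∀ j, 0 < lam j) (hdist : Function.Injective lam)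
    (P : Fin m → H →L[ℂ] H) (P₀ K : H →L[ℂ] H)
    (hPsa : ∀ j, ∀ f g, ⟪P j f, g⟫ = ⟪f, P j g⟫)
    (hPidem : ∀ j, P j ∘L P j = P j)
    (hPorth : ∀ j k, j ≠ k → P j ∘L P k = 0)
    (hK : K = ∑ j, (lam j : ℂ) • P j)
    (hP₀ : P₀ = 1 - ∑ j, P j)
    (p : H) (hp : P₀ p ≠ 0)
    (u : ℝ → H) (hu : ∀ η : ℝ, 0 < η → K (u η) + (η : ℂ) • u η = p) :
    Tendsto (fun η => (⟪u η, p⟫).re / ‖u η‖) (𝓝[>] 0) (𝓝 ‖P₀ p‖) :=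
  stmt16_general m lam hlam P P₀ K hPsa hPidem hPorth hK hP₀ p hp u hu
end

section
/- Let H be a Hilbert space, p₁,...,pₙ, p ∈ H, and define K f = ∑ⱼ (f, pⱼ) pⱼ. Suppose μ, ν > 0 and f = (μ + νK)⁻¹ p satisfies ‖f‖ = 1 and (Kf, f) = ε². Then for every g ∈ H with ‖g‖ ≤ 1 and (Kg, g) ≤ ε², one has Re(g, p) ≤ Re(f, p) = (f, p); i.e., f maximizes Re(·, p) subject to the two constraints. -/
local notation "⟪" x ", " y "⟫" => @inner ℂ _ _ x y

/-!
The point is that `K` is a Gram operator: `(Kf, g) = (Tf, Tg)` for the coefficient map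
`T g = ((pⱼ, g))ⱼ ∈ ℂⁿ`. Hence `Re(p, g) = μ Re(f, g) + ν Re(Tf, Tg)`, and by Cauchy–Schwarz
each term is largest when `g = f`, as soon as `‖g‖ ≤ ‖f‖` and `‖Tg‖ ≤ ‖Tf‖`; at `g = f` the
value `(p, f) = μ‖f‖² + ν‖Tf‖²` is real.
-/

open scoped InnerProductSpace

section GramOperator

variable {𝕜 E F : Type*} [RCLike 𝕜] [NormedAddCommGroup E] [InnerProductSpace 𝕜 E]
  [NormedAddCommGroup F] [InnerProductSpace 𝕜 F]

theorem re_inner_le_norm_sq_of_norm_le {x y : E} (h : ‖y‖ ≤ ‖x‖) :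
    RCLike.re ⟪x, y⟫_𝕜 ≤ ‖x‖ ^ 2 :=
  calc RCLike.re ⟪x, y⟫_𝕜 ≤ ‖x‖ * ‖y‖ := re_inner_le_norm x y
    _ ≤ ‖x‖ * ‖x‖ := by gcongr
    _ = ‖x‖ ^ 2 := (sq _).symm

variable {K : E → E} {T : E → F} {μ ν : ℝ} {f p : E}

theorem inner_eq_of_smul_add_smul_eq (hKT : ∀ f g, ⟪f, K g⟫_𝕜 = ⟪T f, T g⟫_𝕜)
    (hf : (μ : 𝕜) • f + (ν : 𝕜) • K f = p) (g : E) :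
    ⟪p, g⟫_𝕜 = μ * ⟪f, g⟫_𝕜 + ν * ⟪T f, T g⟫_𝕜 := by
  rw [← hf, inner_add_left, inner_smul_left, inner_smul_left, ← inner_conj_symm (K f), hKT,
    inner_conj_symm]
  simp only [RCLike.conj_ofReal]

theorem inner_eq_ofReal_of_smul_add_smul_eq (hKT : ∀ f g, ⟪f, K g⟫_𝕜 = ⟪T f, T g⟫_𝕜)
    (hf : (μ : 𝕜) • f + (ν : 𝕜) • K f = p) :
    ⟪p, f⟫_𝕜 = ((μ * ‖f‖ ^ 2 + ν * ‖T f‖ ^ 2 : ℝ) : 𝕜) := by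
  rw [inner_eq_of_smul_add_smul_eq hKT hf, inner_self_eq_norm_sq_to_K,
    inner_self_eq_norm_sq_to_K]
  push_cast
  rfl

theorem re_inner_le_of_smul_add_smul_eq (hKT : ∀ f g, ⟪f, K g⟫_𝕜 = ⟪T f, T g⟫_𝕜)
    (hf : (μ : 𝕜) • f + (ν : 𝕜) • K f = p) (hμ : 0 ≤ μ) (hν : 0 ≤ ν) {g : E}
    (hg : ‖g‖ ≤ ‖f‖) (hTg : ‖T g‖ ≤ ‖T f‖) :
    RCLike.re ⟪p, g⟫_𝕜 ≤ RCLike.re ⟪p, f⟫_𝕜 := by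
  rw [inner_eq_of_smul_add_smul_eq hKT hf, inner_eq_ofReal_of_smul_add_smul_eq hKT hf]
  simp only [map_add, RCLike.re_ofReal_mul, RCLike.ofReal_re]
  have := re_inner_le_norm_sq_of_norm_le (𝕜 := 𝕜) hg
  have := re_inner_le_norm_sq_of_norm_le (𝕜 := 𝕜) hTg
  gcongr

end GramOperator

section CoefficientMap

variable (𝕜 : Type*) {E : Type*} [RCLike 𝕜] [NormedAddCommGroup E] [InnerProductSpace 𝕜 E]
  {n : ℕ}

noncomputable def coeffMap (p' : Fin n → E) (g : E) : EuclideanSpace 𝕜 (Fin n) :=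
  WithLp.toLp 2 fun j => ⟪p' j, g⟫_𝕜

theorem inner_sum_inner_smul_eq_inner_coeffMap (p' : Fin n → E) (f g : E) :
    ⟪f, ∑ j, ⟪p' j, g⟫_𝕜 • p' j⟫_𝕜 = ⟪coeffMap 𝕜 p' f, coeffMap 𝕜 p' g⟫_𝕜 := by
  simp only [inner_sum, inner_smul_right, coeffMap, PiLp.inner_apply, RCLike.inner_apply,
    inner_conj_symm]

end CoefficientMap

theorem stmt18_general {H : Type*} [NormedAddCommGroup H] [InnerProductSpace ℂ H]
    (n : ℕ) (p' : Fin n → H) (p : H) (K : H →L[ℂ] H)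
    (hK : ∀ f, K f = ∑ j, ⟪p' j, f⟫ • p' j)
    (μ ν : ℝ) (hμ : 0 < μ) (hν : 0 < ν) (ε : ℝ)
    (f : H) (hf : (μ : ℂ) • f + (ν : ℂ) • K f = p)
    (hnorm : ‖f‖ = 1) (hquad : (⟪f, K f⟫).re = ε ^ 2) :
    (∀ g : H, ‖g‖ ≤ 1 → (⟪g, K g⟫).re ≤ ε ^ 2 → (⟪p, g⟫).re ≤ (⟪p, f⟫).re) ∧
    (⟪p, f⟫).im = 0 := by
  have hKT : ∀ f g, ⟪f, K g⟫ = ⟪coeffMap ℂ p' f, coeffMap ℂ p' g⟫ := fun f g => by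
    rw [hK, inner_sum_inner_smul_eq_inner_coeffMap]
  have hKg_norm : ∀ g, (⟪g, K g⟫).re = ‖coeffMap ℂ p' g‖ ^ 2 := fun g => by
    rw [hKT, inner_self_eq_norm_sq_to_K]
    norm_cast
  refine ⟨fun g hg hKg => re_inner_le_of_smul_add_smul_eq hKT hf hμ.le hν.le
    (hnorm ▸ hg) ?_, ?_⟩
  · rw [hKg_norm] at hKg hquad
    exact pow_le_pow_iff_left₀ (norm_nonneg _) (norm_nonneg _) two_ne_zero |>.mp
      (hquad ▸ hKg)
  · rw [inner_eq_ofReal_of_smul_add_smul_eq hKT hf]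
    exact Complex.ofReal_im _

/-- If `f = (μ+νK)⁻¹p` (with `μ,ν > 0`) satisfies the equality
constraints `‖f‖ = 1` and `(Kf,f) = ε²`, then `f` maximizes `Re(·,p)` among all `g` with
`‖g‖ ≤ 1` and `(Kg,g) ≤ ε²`; moreover `(f,p)` is real. -/
theorem stmt18 {H : Type*} [NormedAddCommGroup H] [InnerProductSpace ℂ H] [CompleteSpace H]
    (n : ℕ) (p' : Fin n → H) (p : H) (K : H →L[ℂ] H)
    (hK : ∀ f, K f = ∑ j, ⟪p' j, f⟫ • p' j)
    (μ ν : ℝ) (hμ : 0 < μ) (hν : 0 < ν) (ε : ℝ) (hε : 0 < ε)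
    (f : H) (hf : (μ : ℂ) • f + (ν : ℂ) • K f = p)
    (hnorm : ‖f‖ = 1) (hquad : (⟪f, K f⟫).re = ε ^ 2) :
    (∀ g : H, ‖g‖ ≤ 1 → (⟪g, K g⟫).re ≤ ε ^ 2 → (⟪p, g⟫).re ≤ (⟪p, f⟫).re) ∧
    (⟪p, f⟫).im = 0 :=
  stmt18_general n p' p K hK μ ν hμ hν ε f hf hnorm hquad
end

section
/- Let H be a Hilbert space, K a bounded self-adjoint positive semidefinite operator on H, p ∈ H, η > 0, and u = (K + η)⁻¹ p. Suppose (Ku, u)/‖u‖² = ε². Then sup{ Re(f, p) : ‖f‖ ≤ 1, (Kf, f) ≤ ε² } = (u, p)/‖u‖ = (ε² + η)‖u‖. -/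
/-! Testing positivity of `K` on `u - ‖u‖ f` gives `Re(u, Kf) ≤ ε² ‖u‖` whenever `(Kf, f) ≤ ε²`.
Since `p = Ku + ηu`, this yields `Re(p, f) = Re(u, Kf) + η Re(u, f) ≤ (ε² + η) ‖u‖` for every
admissible `f`, with equality at `f = u / ‖u‖`. -/

local notation "⟪" x ", " y "⟫" => @inner ℂ _ _ x y

open RCLike

namespace LinearMap

variable {𝕜 E : Type*} [RCLike 𝕜] [NormedAddCommGroup E] [InnerProductSpace 𝕜 E]
  {T : E →ₗ[𝕜] E}

theorem IsSymmetric.re_inner_sub_map_sub (hT : T.IsSymmetric) (x y : E) :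
    re (inner 𝕜 (x - y) (T (x - y))) =
      re (inner 𝕜 x (T x)) - 2 * re (inner 𝕜 x (T y)) + re (inner 𝕜 y (T y)) := by
  have hyx : re (inner 𝕜 y (T x)) = re (inner 𝕜 x (T y)) := by
    rw [← hT, inner_re_symm]
  simp only [map_sub, inner_sub_left, inner_sub_right, hyx]
  ring

theorem IsPositive.two_mul_re_inner_map_le (hT : T.IsPositive) (x y : E) :
    2 * re (inner 𝕜 x (T y)) ≤ re (inner 𝕜 x (T x)) + re (inner 𝕜 y (T y)) := by
  have := hT.re_inner_nonneg_right (x - y)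
  rw [hT.isSymmetric.re_inner_sub_map_sub] at this
  linarith

theorem IsPositive.re_inner_map_le_mul_norm (hT : T.IsPositive) {u f : E} {c : ℝ}
    (hu : re (inner 𝕜 u (T u)) = c * ‖u‖ ^ 2) (hf : re (inner 𝕜 f (T f)) ≤ c) :
    re (inner 𝕜 u (T f)) ≤ c * ‖u‖ := by
  rcases (norm_nonneg u).eq_or_lt with hu0 | hu0
  · simp [norm_eq_zero.mp hu0.symm]
  have h := hT.two_mul_re_inner_map_le u ((‖u‖ : 𝕜) • f)
  simp only [map_smul, inner_smul_left, inner_smul_right, conj_ofReal, ← mul_assoc,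
    ← ofReal_mul, re_ofReal_mul] at h
  have hf' := mul_le_mul_of_nonneg_left hf (mul_self_nonneg ‖u‖)
  refine le_of_mul_le_mul_left (a := 2 * ‖u‖) ?_ (by positivity)
  linear_combination h + hf' + hu

theorem IsSymmetric.inner_map_add_ofReal_smul_left (hT : T.IsSymmetric) (η : ℝ) (u f : E) :
    inner 𝕜 (T u + (η : 𝕜) • u) f = inner 𝕜 u (T f) + η * inner 𝕜 u f := by
  rw [inner_add_left, inner_smul_left, hT, conj_ofReal]

variable {η c : ℝ} {u p : E}

theorem IsPositive.re_inner_le_of_norm_le_one (hT : T.IsPositive) (hη : 0 ≤ η)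
    (hp : T u + (η : 𝕜) • u = p) (hu : re (inner 𝕜 u (T u)) = c * ‖u‖ ^ 2) {f : E}
    (hf₁ : ‖f‖ ≤ 1) (hf : re (inner 𝕜 f (T f)) ≤ c) :
    re (inner 𝕜 p f) ≤ (c + η) * ‖u‖ := by
  have hKf := hT.re_inner_map_le_mul_norm hu hf
  have huf : re (inner 𝕜 u f) ≤ ‖u‖ :=
    calc re (inner 𝕜 u f) ≤ ‖u‖ * ‖f‖ := re_inner_le_norm u f
      _ ≤ ‖u‖ := mul_le_of_le_one_right (norm_nonneg u) hf₁
  rw [← hp, hT.isSymmetric.inner_map_add_ofReal_smul_left, map_add, re_ofReal_mul]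
  linarith [mul_le_mul_of_nonneg_left huf hη]

theorem re_inner_eq_of_map_add_ofReal_smul_eq (hp : T u + (η : 𝕜) • u = p)
    (hu : re (inner 𝕜 u (T u)) = c * ‖u‖ ^ 2) : re (inner 𝕜 u p) = (c + η) * ‖u‖ ^ 2 := by
  rw [← hp, inner_add_right, inner_smul_right, inner_self_eq_norm_sq_to_K, map_add, hu,
    ← ofReal_pow, ← ofReal_mul, ofReal_re]
  ring

theorem IsPositive.isGreatest_re_inner (hT : T.IsPositive) (hη : 0 ≤ η) (hu₀ : u ≠ 0)
    (hp : T u + (η : 𝕜) • u = p) (hu : re (inner 𝕜 u (T u)) = c * ‖u‖ ^ 2) :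
    IsGreatest {r : ℝ | ∃ f : E, ‖f‖ ≤ 1 ∧ re (inner 𝕜 f (T f)) ≤ c ∧ r = re (inner 𝕜 p f)}
      ((c + η) * ‖u‖) := by
  have hN : ‖u‖ ≠ 0 := norm_ne_zero_iff.mpr hu₀
  refine ⟨⟨((‖u‖⁻¹ : ℝ) : 𝕜) • u, ?_, ?_, ?_⟩, ?_⟩
  · simp [norm_smul, hN]
  · simp only [map_smul, inner_smul_left, inner_smul_right, conj_ofReal, ← mul_assoc,
      ← ofReal_mul, re_ofReal_mul, hu]
    exact le_of_eq (by field_simp)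
  · rw [inner_smul_right, re_ofReal_mul, inner_re_symm,
      re_inner_eq_of_map_add_ofReal_smul_eq hp hu]
    field_simp
  · rintro _ ⟨f, hf₁, hf, rfl⟩
    exact hT.re_inner_le_of_norm_le_one hη hp hu hf₁ hf

end LinearMap

theorem stmt19_general {H : Type*} [NormedAddCommGroup H] [InnerProductSpace ℂ H]
    (K : H →L[ℂ] H)
    (hsa : ∀ f g, ⟪K f, g⟫ = ⟪f, K g⟫) (hpsd : ∀ f, 0 ≤ (⟪f, K f⟫).re)
    (p : H) (η : ℝ) (hη : 0 < η) (u : H) (hu0 : u ≠ 0)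
    (hu : K u + (η : ℂ) • u = p)
    (ε : ℝ) (hε2 : ε ^ 2 = (⟪u, K u⟫).re / ‖u‖ ^ 2) :
    IsGreatest {r : ℝ | ∃ f : H, ‖f‖ ≤ 1 ∧ (⟪f, K f⟫).re ≤ ε ^ 2 ∧ r = (⟪p, f⟫).re}
      ((⟪u, p⟫).re / ‖u‖) ∧
    (⟪u, p⟫).re / ‖u‖ = (ε ^ 2 + η) * ‖u‖ := by
  have hK : (K : H →ₗ[ℂ] H).IsPositive := ⟨hsa, fun f => inner_re_symm (𝕜 := ℂ) f _ ▸ hpsd f⟩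
  have hN : ‖u‖ ≠ 0 := norm_ne_zero_iff.mpr hu0
  have hKu : (⟪u, K u⟫).re = ε ^ 2 * ‖u‖ ^ 2 := by
    rw [hε2]; field_simp
  have hup : (⟪u, p⟫).re = (ε ^ 2 + η) * ‖u‖ ^ 2 :=
    LinearMap.re_inner_eq_of_map_add_ofReal_smul_eq (T := (K : H →ₗ[ℂ] H)) hu hKu
  have hval : (⟪u, p⟫).re / ‖u‖ = (ε ^ 2 + η) * ‖u‖ := by
    rw [hup]; field_simp
  exact ⟨hval ▸ hK.isGreatest_re_inner hη.le hu0 hu hKu, hval⟩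

/-- With `u = (K+η)⁻¹p` and `ε² = (Ku,u)/‖u‖²`,
`sup{Re(f,p) : ‖f‖ ≤ 1, (Kf,f) ≤ ε²} = (u,p)/‖u‖ = (ε²+η)‖u‖`,
the supremum being attained (at `u/‖u‖`). -/
theorem stmt19 {H : Type*} [NormedAddCommGroup H] [InnerProductSpace ℂ H] [CompleteSpace H]
    (K : H →L[ℂ] H)
    (hsa : ∀ f g, ⟪K f, g⟫ = ⟪f, K g⟫) (hpsd : ∀ f, 0 ≤ (⟪f, K f⟫).re)
    (p : H) (η : ℝ) (hη : 0 < η) (u : H) (hu0 : u ≠ 0)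
    (hu : K u + (η : ℂ) • u = p)
    (ε : ℝ) (hε : 0 ≤ ε) (hε2 : ε ^ 2 = (⟪u, K u⟫).re / ‖u‖ ^ 2) :
    IsGreatest {r : ℝ | ∃ f : H, ‖f‖ ≤ 1 ∧ (⟪f, K f⟫).re ≤ ε ^ 2 ∧ r = (⟪p, f⟫).re}
      ((⟪u, p⟫).re / ‖u‖) ∧
    (⟪u, p⟫).re / ‖u‖ = (ε ^ 2 + η) * ‖u‖ :=
  stmt19_general K hsa hpsd p η hη u hu0 hu ε hε2
end
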